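/- arXiv:1101.4316 — 4 statements merged into one kernel-verified Lean document; each statement's English description precedes it below -/
import Mathlib

section
/- If Y is a random variable in a separable Hilbert space satisfying the Gaussian-type small ball bound P(‖Y − m‖ ≤ ε) ≤ C₁ ε^{C₄} exp(−C₂ ε^{−C₃}) for all ε ∈ (0,1], with C₁, C₂, C₃ > 0, then E[‖Y − m‖^{-β}] < ∞ for every β > 0. -/
/-!
Cut the range of `X = ‖Y - m‖` at the dyadic radii `2⁻ⁿ`. On `{X ≤ 2⁻ⁿ}` the weight `X^{-β}` is
charged at most `2^{(n+1)β}`, so `E[X^{-β}] ≤ 1 + ∑ₙ 2^{(n+1)β} P(X ≤ 2⁻ⁿ)`. The small ball bound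
makes the `n`-th term at most a constant times `ρⁿ exp(-C₂ tⁿ)` with `t = 2^{C₃} > 1`: the doubly
exponential decay beats any geometric growth, so the series converges.
-/

open MeasureTheory Real Filter

lemma summable_geometric_mul_exp_neg_pow (ρ : ℝ) {c t : ℝ} (hc : 0 < c) (ht : 1 < t) :
    Summable fun n : ℕ => ρ ^ n * exp (-c * t ^ n) := by
  refine summable_of_ratio_norm_eventually_le (r := 1 / 2) (by norm_num) ?_
  have hdecay : Tendsto (fun n : ℕ => |ρ| * exp (-(c * (t - 1)) * t ^ n)) atTop (nhds 0) := by
    have hlin : Tendsto (fun x : ℝ => -(c * (t - 1)) * x) atTop atBot :=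
      tendsto_id.const_mul_atTop_of_neg (by nlinarith)
    simpa using ((tendsto_exp_atBot.comp hlin).comp
      (tendsto_pow_atTop_atTop_of_one_lt ht)).const_mul |ρ|
  filter_upwards [hdecay.eventually_le_const (by norm_num : (0 : ℝ) < 1 / 2)] with n hn
  have hsplit : -c * t ^ (n + 1) = -(c * (t - 1)) * t ^ n + -c * t ^ n := by ring
  simp only [norm_mul, norm_pow, norm_eq_abs, abs_exp]
  rw [hsplit, exp_add, pow_succ]
  calc |ρ| ^ n * |ρ| * (exp (-(c * (t - 1)) * t ^ n) * exp (-c * t ^ n))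
      = (|ρ| * exp (-(c * (t - 1)) * t ^ n)) * (|ρ| ^ n * exp (-c * t ^ n)) := by ring
    _ ≤ 1 / 2 * (|ρ| ^ n * exp (-c * t ^ n)) := by gcongr

lemma summable_smallBall_series {q : ℝ} (hq₀ : 0 < q) (hq₁ : q < 1) (β C₁ C₄ : ℝ) {C₂ C₃ : ℝ}
    (hC₂ : 0 < C₂) (hC₃ : 0 < C₃) :
    Summable fun n : ℕ =>
      (q ^ (n + 1)) ^ (-β) * (C₁ * (q ^ n) ^ C₄ * exp (-C₂ * (q ^ n) ^ (-C₃))) := by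
  have ht : 1 < q ^ (-C₃) := one_lt_rpow_of_pos_of_lt_one_of_neg hq₀ hq₁ (by linarith)
  refine ((summable_geometric_mul_exp_neg_pow (q ^ (-β) * q ^ C₄) hC₂ ht).mul_left
    (q ^ (-β) * C₁)).congr fun n => ?_
  simp only [← rpow_pow_comm hq₀.le]
  ring

lemma ofReal_rpow_neg_le_one_add_tsum {q : ℝ} (hq₀ : 0 < q) (hq₁ : q < 1) {β : ℝ} (hβ : 0 ≤ β)
    {x : ℝ} (hx : 0 < x) :
    ENNReal.ofReal (x ^ (-β)) ≤
      1 + ∑' n : ℕ, (Set.Iic (q ^ n)).indicator (fun _ => ENNReal.ofReal ((q ^ (n + 1)) ^ (-β))) x := by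
  rcases le_or_gt x 1 with hx₁ | hx₁
  · obtain ⟨n, hlt, hle⟩ := exists_nat_pow_near_of_lt_one hx hx₁ hq₀ hq₁
    refine le_add_left (le_trans ?_ (ENNReal.le_tsum n))
    rw [Set.indicator_of_mem (Set.mem_Iic.2 hle)]
    exact ENNReal.ofReal_le_ofReal
      (rpow_le_rpow_of_nonpos (pow_pos hq₀ _) hlt.le (neg_nonpos.2 hβ))
  · refine le_add_right (ENNReal.ofReal_le_one.2 ?_)
    exact rpow_le_one_of_one_le_of_nonpos hx₁.le (neg_nonpos.2 hβ)

lemma lintegral_rpow_neg_le_tsum {Ω : Type*} [MeasurableSpace Ω] {μ : Measure Ω} {X : Ω → ℝ}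
    (hX : Measurable X) (hXpos : ∀ᵐ ω ∂μ, 0 < X ω) {β : ℝ} (hβ : 0 ≤ β) {q : ℝ} (hq₀ : 0 < q)
    (hq₁ : q < 1) :
    ∫⁻ ω, ENNReal.ofReal (X ω ^ (-β)) ∂μ ≤
      μ Set.univ + ∑' n : ℕ, ENNReal.ofReal ((q ^ (n + 1)) ^ (-β)) * μ {ω | X ω ≤ q ^ n} := by
  have hlevel : ∀ n : ℕ, MeasurableSet {ω | X ω ≤ q ^ n} := fun n => hX measurableSet_Iic
  calc ∫⁻ ω, ENNReal.ofReal (X ω ^ (-β)) ∂μ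
      ≤ ∫⁻ ω, 1 + ∑' n : ℕ, {ω | X ω ≤ q ^ n}.indicator
          (fun _ => ENNReal.ofReal ((q ^ (n + 1)) ^ (-β))) ω ∂μ :=
        lintegral_mono_ae <| hXpos.mono fun ω hω =>
          ofReal_rpow_neg_le_one_add_tsum hq₀ hq₁ hβ hω
    _ = μ Set.univ + ∑' n : ℕ, ENNReal.ofReal ((q ^ (n + 1)) ^ (-β)) * μ {ω | X ω ≤ q ^ n} := by
        rw [lintegral_add_left measurable_const, lintegral_one, lintegral_tsum fun n =>
          (measurable_const.indicator (hlevel n)).aemeasurable]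
        simp only [lintegral_indicator_const (hlevel _)]

theorem stmt_2_general
    {H : Type*} [NormedAddCommGroup H]
    [MeasurableSpace H] [BorelSpace H]
    {Ω : Type*} [MeasurableSpace Ω] (μ : Measure Ω) [IsProbabilityMeasure μ]
    (Y : Ω → H) (hY : Measurable Y) (m : H)
    (hne : ∀ᵐ ω ∂μ, Y ω ≠ m)
    (C₁ C₂ C₃ C₄ : ℝ) (hC₂ : 0 < C₂) (hC₃ : 0 < C₃)
    (hball : ∀ ε ∈ Set.Ioc (0 : ℝ) 1,
      μ {ω | ‖Y ω - m‖ ≤ ε} ≤ ENNReal.ofReal (C₁ * ε ^ C₄ * Real.exp (-C₂ * ε ^ (-C₃))))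
    (β : ℝ) (hβ : 0 < β) :
    ∫⁻ ω, ENNReal.ofReal (‖Y ω - m‖ ^ (-β)) ∂μ < ⊤ := by
  have hX : Measurable fun ω => ‖Y ω - m‖ :=
    (continuous_id.sub continuous_const).norm.measurable.comp hY
  have hXpos : ∀ᵐ ω ∂μ, 0 < ‖Y ω - m‖ :=
    hne.mono fun ω hω => norm_pos_iff.2 (sub_ne_zero.2 hω)
  have hq₀ : (0 : ℝ) < 1 / 2 := by norm_num
  have hq₁ : (1 / 2 : ℝ) < 1 := by norm_num
  refine (lintegral_rpow_neg_le_tsum hX hXpos hβ.le hq₀ hq₁).trans_lt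
    (ENNReal.add_lt_top.2 ⟨measure_lt_top μ _, ?_⟩)
  refine lt_of_le_of_lt (ENNReal.tsum_le_tsum fun n => ?_)
    (summable_smallBall_series hq₀ hq₁ β C₁ C₄ hC₂ hC₃).tsum_ofReal_lt_top
  rw [ENNReal.ofReal_mul (rpow_nonneg (by positivity) _)]
  exact mul_le_mul_right (hball _ ⟨by positivity, pow_le_one₀ hq₀.le hq₁.le⟩) _

/-- Under a Gaussian-type small ball bound
`P(‖Y - m‖ ≤ ε) ≤ C₁ ε^{C₄} exp(-C₂ ε^{-C₃})`, all negative moments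
`E[‖Y - m‖^{-β}]`, `β > 0`, are finite. -/
theorem stmt_2
    {H : Type*} [NormedAddCommGroup H] [InnerProductSpace ℝ H]
    [CompleteSpace H] [SecondCountableTopology H] [MeasurableSpace H] [BorelSpace H]
    {Ω : Type*} [MeasurableSpace Ω] (μ : Measure Ω) [IsProbabilityMeasure μ]
    (Y : Ω → H) (hY : Measurable Y) (m : H)
    (hne : ∀ᵐ ω ∂μ, Y ω ≠ m)
    (C₁ C₂ C₃ C₄ : ℝ) (hC₁ : 0 < C₁) (hC₂ : 0 < C₂) (hC₃ : 0 < C₃)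
    (hball : ∀ ε ∈ Set.Ioc (0 : ℝ) 1,
      μ {ω | ‖Y ω - m‖ ≤ ε} ≤ ENNReal.ofReal (C₁ * ε ^ C₄ * Real.exp (-C₂ * ε ^ (-C₃))))
    (β : ℝ) (hβ : 0 < β) :
    ∫⁻ ω, ENNReal.ofReal (‖Y ω - m‖ ^ (-β)) ∂μ < ⊤ :=
  stmt_2_general μ Y hY m hne C₁ C₂ C₃ C₄ hC₂ hC₃ hball β hβ
end

section
/- Let (V_n) be a sequence of nonnegative integrable random variables adapted to a filtration (ℱ_n), and (γ_n) a sequence of nonnegative reals with Σ γ_n² < ∞, such that E[V_{n+1} | ℱ_n] ≤ V_n + γ_n². Then (V_n) converges almost surely to a finite random variable, and sup_n E[V_n] ≤ E[V_0] + Σ_{k≥1} γ_k². -/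
/-!
Adding the tail `∑_{k ≥ n} γ_k²` of the summable series to `V_n` absorbs the drift: the result
`U_n` is a nonnegative supermartingale. Its expectations decrease, so it is bounded in `L¹` and
converges almost surely by the martingale convergence theorem. The tail tends to `0`, so
`V_n = U_n - ∑_{k ≥ n} γ_k²` converges as well, and `E[V_n] ≤ E[U_n] ≤ E[U_0] = E[V_0] + ∑ γ_k²`.
-/

open MeasureTheory Filter Topology

theorem Summable.tsum_nat_add_eq_add_tsum_nat_add_succ {f : ℕ → ℝ} (hf : Summable f) (n : ℕ) :
    ∑' k, f (k + n) = f n + ∑' k, f (k + (n + 1)) := by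
  rw [((summable_nat_add_iff n).2 hf).tsum_eq_zero_add]
  simp only [zero_add, add_right_comm _ 1 n, add_assoc]

namespace MeasureTheory

variable {Ω : Type*} {m0 : MeasurableSpace Ω} {μ : Measure Ω} {ℱ : Filtration ℕ m0}

theorem Supermartingale.integral_le [IsFiniteMeasure μ] {f : ℕ → Ω → ℝ}
    (hf : Supermartingale f ℱ μ) {i j : ℕ} (hij : i ≤ j) :
    ∫ ω, f j ω ∂μ ≤ ∫ ω, f i ω ∂μ := by
  simpa only [setIntegral_univ] using hf.setIntegral_le hij MeasurableSet.univ

theorem Supermartingale.eLpNorm_one_le_of_nonneg [IsFiniteMeasure μ] {f : ℕ → Ω → ℝ}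
    (hf : Supermartingale f ℱ μ) (hnonneg : ∀ n, 0 ≤ᵐ[μ] f n) (n : ℕ) :
    eLpNorm (f n) 1 μ ≤ ENNReal.ofReal (∫ ω, f 0 ω ∂μ) := by
  have hnorm : eLpNorm (f n) 1 μ = ENNReal.ofReal (∫ ω, f n ω ∂μ) := by
    rw [eLpNorm_one_eq_lintegral_enorm,
      ofReal_integral_eq_lintegral_ofReal (hf.integrable n) (hnonneg n)]
    refine lintegral_congr_ae ?_
    filter_upwards [hnonneg n] with ω hω
    exact Real.enorm_eq_ofReal hω
  rw [hnorm]
  exact ENNReal.ofReal_le_ofReal (hf.integral_le n.zero_le)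

theorem Supermartingale.exists_ae_tendsto_of_nonneg [IsFiniteMeasure μ] {f : ℕ → Ω → ℝ}
    (hf : Supermartingale f ℱ μ) (hnonneg : ∀ n, 0 ≤ᵐ[μ] f n) :
    ∀ᵐ ω ∂μ, ∃ c, Tendsto (fun n => f n ω) atTop (𝓝 c) := by
  have hbdd (n : ℕ) : eLpNorm ((-f) n) 1 μ ≤ (∫ ω, f 0 ω ∂μ).toNNReal := by
    rw [Pi.neg_apply, eLpNorm_neg]
    exact hf.eLpNorm_one_le_of_nonneg hnonneg n
  filter_upwards [hf.neg.exists_ae_tendsto_of_bdd hbdd] with ω ⟨c, hc⟩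
  exact ⟨-c, by simpa using hc.neg⟩

theorem supermartingale_add_tsum_nat_add [IsFiniteMeasure μ] {V : ℕ → Ω → ℝ} {c : ℕ → ℝ}
    (hadapted : Adapted ℱ V) (hint : ∀ n, Integrable (V n) μ) (hc : Summable c)
    (hcond : ∀ n, μ[V (n + 1) | ℱ n] ≤ᵐ[μ] fun ω => V n ω + c n) :
    Supermartingale (fun n ω => V n ω + ∑' k, c (k + n)) ℱ μ := by
  refine supermartingale_nat (fun n => ((hadapted n).add measurable_const).stronglyMeasurable)
    (fun n => (hint n).add (integrable_const _)) fun n => ?_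
  have hcondExp : μ[fun ω => V (n + 1) ω + ∑' k, c (k + (n + 1)) | ℱ n] =ᵐ[μ]
      fun ω => μ[V (n + 1) | ℱ n] ω + ∑' k, c (k + (n + 1)) := by
    filter_upwards [condExp_add (hint (n + 1)) (integrable_const (∑' k, c (k + (n + 1)))) (ℱ n)]
      with ω hω
    rw [← Pi.add_def, hω, Pi.add_apply, condExp_const (ℱ.le n)]
  filter_upwards [hcondExp, hcond n] with ω hω hω'
  rw [hω, hc.tsum_nat_add_eq_add_tsum_nat_add_succ n]
  linarith

end MeasureTheory

theorem stmt_13_general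
    {Ω : Type*} {m0 : MeasurableSpace Ω}
    (μ : Measure Ω) [IsProbabilityMeasure μ]
    (ℱ : Filtration ℕ m0)
    (V : ℕ → Ω → ℝ) (hadapted : Adapted ℱ V)
    (hpos : ∀ n, 0 ≤ᵐ[μ] V n)
    (hint : ∀ n, Integrable (V n) μ)
    (γ : ℕ → ℝ)
    (hγ2 : Summable (fun n => γ n ^ 2))
    (hcond : ∀ n, μ[V (n + 1) | ℱ n] ≤ᵐ[μ] fun ω => V n ω + γ n ^ 2) :
    (∃ Vlim : Ω → ℝ, ∀ᵐ ω ∂μ, Tendsto (fun n => V n ω) atTop (nhds (Vlim ω))) ∧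
    (∀ n, ∫ ω, V n ω ∂μ ≤ (∫ ω, V 0 ω ∂μ) + ∑' k, γ k ^ 2) := by
  set tail : ℕ → ℝ := fun n => ∑' k, γ (k + n) ^ 2
  have htail_nonneg (n : ℕ) : 0 ≤ tail n := tsum_nonneg fun k => sq_nonneg _
  have htail_tendsto : Tendsto tail atTop (𝓝 0) := tendsto_sum_nat_add fun k => γ k ^ 2
  have hU : Supermartingale (fun n ω => V n ω + tail n) ℱ μ :=
    supermartingale_add_tsum_nat_add hadapted hint hγ2 hcond
  have hU_nonneg (n : ℕ) : 0 ≤ᵐ[μ] fun ω => V n ω + tail n := by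
    filter_upwards [hpos n] with ω hω
    exact add_nonneg hω (htail_nonneg n)
  have hintegral (n : ℕ) : ∫ ω, V n ω + tail n ∂μ = ∫ ω, V n ω ∂μ + tail n := by
    simp [integral_add (hint n) (integrable_const _)]
  refine ⟨⟨fun ω => limUnder atTop fun n => V n ω, ?_⟩, fun n => ?_⟩
  · filter_upwards [hU.exists_ae_tendsto_of_nonneg hU_nonneg] with ω ⟨c, hc⟩
    have hV : Tendsto (fun n => V n ω) atTop (𝓝 c) := by
      simpa only [add_sub_cancel_right, sub_zero] using hc.sub htail_tendsto
    rw [hV.limUnder_eq]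
    exact hV
  · have hmono := hU.integral_le n.zero_le
    have htail_zero : tail 0 = ∑' k, γ k ^ 2 := by simp only [tail, add_zero]
    rw [hintegral, hintegral, htail_zero] at hmono
    linarith [htail_nonneg n]

/-- Robbins–Siegmund-type lemma: if `E[V_{n+1} | ℱ_n] ≤ V_n + γ_n²` with
`Σ γ_n² < ∞`, then `V_n` converges a.s. and the expectations are uniformly
bounded by `E[V_0] + Σ γ_k²`. -/
theorem stmt_13
    {Ω : Type*} {m0 : MeasurableSpace Ω}
    (μ : Measure Ω) [IsProbabilityMeasure μ]
    (ℱ : Filtration ℕ m0)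
    (V : ℕ → Ω → ℝ) (hadapted : Adapted ℱ V)
    (hpos : ∀ n, 0 ≤ᵐ[μ] V n)
    (hint : ∀ n, Integrable (V n) μ)
    (γ : ℕ → ℝ) (hγ : ∀ n, 0 ≤ γ n)
    (hγ2 : Summable (fun n => γ n ^ 2))
    (hcond : ∀ n, μ[V (n + 1) | ℱ n] ≤ᵐ[μ] fun ω => V n ω + γ n ^ 2) :
    (∃ Vlim : Ω → ℝ, ∀ᵐ ω ∂μ, Tendsto (fun n => V n ω) atTop (nhds (Vlim ω))) ∧
    (∀ n, ∫ ω, V n ω ∂μ ≤ (∫ ω, V 0 ω ∂μ) + ∑' k, γ k ^ 2) :=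
  stmt_13_general μ ℱ V hadapted hpos hint γ hγ2 hcond
end

section
/- Let α ∈ (1/2, 1) and c > 0. Consider the sum S_n = Σ_{k=1}^{n-1} k^{-2α} exp(−c(n^{1−α} − k^{1−α})). Then there exists C > 0 such that S_n ≤ C ln(n) n^{-α} for all n ≥ 2. -/
/-!
The sum is in fact `O(n^{-α})`. Split it at `k = n/2`. For `k ≤ n/2` the exponent is at most
`-c (1 - 2^{α-1}) n^{1-α}`, and a stretched exponential beats every power of `n`. For `k > n/2`,
`k^{-2α} ≤ 4 n^{-2α}` and concavity of `t ↦ t^{1-α}` gives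
`n^{1-α} - k^{1-α} ≥ (1-α) n^{-α} (n - k)`, so these terms are dominated by a geometric series of
ratio `exp(-c(1-α) n^{-α})`, whose sum is `O(n^α)`.
-/

open Real Finset
open scoped Nat

lemma rpow_le_rpow_add_mul_sub {p x y : ℝ} (hp0 : 0 ≤ p) (hp1 : p ≤ 1) (hx : 0 < x)
    (hy : 0 ≤ y) : y ^ p ≤ x ^ p + p * x ^ (p - 1) * (y - x) := by
  have h := rpow_one_add_le_one_add_mul_self (s := y / x - 1)
    (by linarith [div_nonneg hy hx.le]) hp0 hp1
  rw [add_sub_cancel, div_rpow hy hx.le, div_le_iff₀ (rpow_pos_of_pos hx p)] at h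
  calc y ^ p ≤ (1 + p * (y / x - 1)) * x ^ p := h
    _ = x ^ p + p * x ^ (p - 1) * (y - x) := by rw [rpow_sub_one hx.ne']; field_simp

lemma inv_one_sub_exp_neg_le {β : ℝ} (hβ : 0 < β) : (1 - exp (-β))⁻¹ ≤ 1 + β⁻¹ := by
  have hexp : exp (-β) ≤ (1 + β)⁻¹ := by
    rw [exp_neg]; exact inv_anti₀ (by positivity) (by linarith [add_one_le_exp β])
  calc (1 - exp (-β))⁻¹ ≤ (β / (1 + β))⁻¹ := by
        refine inv_anti₀ (by positivity) ?_
        have : β / (1 + β) = 1 - (1 + β)⁻¹ := by field_simp; ring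
        linarith
    _ = 1 + β⁻¹ := by field_simp; ring

lemma sum_range_exp_neg_pow_le {β : ℝ} (hβ : 0 < β) (n : ℕ) :
    ∑ j ∈ range n, exp (-β) ^ j ≤ 1 + β⁻¹ := by
  have h0 : 0 ≤ exp (-β) := (exp_pos _).le
  have h1 : exp (-β) < 1 := exp_lt_one_iff.mpr (by linarith)
  calc ∑ j ∈ range n, exp (-β) ^ j ≤ ∑' j, exp (-β) ^ j :=
        (summable_geometric_of_lt_one h0 h1).sum_le_tsum _ fun j _ => pow_nonneg h0 j
    _ = (1 - exp (-β))⁻¹ := tsum_geometric_of_lt_one h0 h1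
    _ ≤ 1 + β⁻¹ := inv_one_sub_exp_neg_le hβ

lemma sum_Ioc_pow_sub_le {r : ℝ} (hr0 : 0 ≤ r) (hr1 : r ≤ 1) (m n : ℕ) :
    ∑ k ∈ Ioc m (n - 1), r ^ (n - k) ≤ ∑ j ∈ range n, r ^ j := by
  calc ∑ k ∈ Ioc m (n - 1), r ^ (n - k) ≤ ∑ k ∈ Ioc m (n - 1), r ^ (n - 1 - k) :=
        sum_le_sum fun k _ => pow_le_pow_of_le_one hr0 hr1 (by omega)
    _ ≤ ∑ k ∈ range n, r ^ (n - 1 - k) :=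
        sum_le_sum_of_subset_of_nonneg (fun k hk => by simp only [mem_Ioc, mem_range] at hk ⊢; omega)
          fun _ _ _ => pow_nonneg hr0 _
    _ = ∑ j ∈ range n, r ^ j := sum_range_reflect (r ^ ·) n

lemma rpow_le_mul_exp_mul_rpow {x s p δ : ℝ} {m : ℕ} (hx : 1 ≤ x) (hδ : 0 < δ)
    (hs : s ≤ p * m) : x ^ s ≤ m ! / δ ^ m * exp (δ * x ^ p) := by
  have hxp : 0 < x ^ p := rpow_pos_of_pos (by linarith) p
  calc x ^ s ≤ x ^ (p * m) := rpow_le_rpow_of_exponent_le hx hs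
    _ = m ! / δ ^ m * ((δ * x ^ p) ^ m / m !) := by
        rw [rpow_mul (by linarith), rpow_natCast, mul_pow]; field_simp
    _ ≤ m ! / δ ^ m * exp (δ * x ^ p) := by
        gcongr; exact Real.pow_div_factorial_le_exp _ (by positivity) m

lemma rpow_neg_le_four_mul {a x y : ℝ} (ha0 : 0 ≤ a) (ha2 : a ≤ 2) (hx : 0 < x)
    (hxy : x ≤ 2 * y) : y ^ (-a) ≤ 4 * x ^ (-a) := by
  calc y ^ (-a) ≤ (x / 2) ^ (-a) := rpow_le_rpow_of_nonpos (by positivity) (by linarith)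
        (by linarith)
    _ = 2 ^ a * x ^ (-a) := by
        rw [div_rpow hx.le zero_le_two, rpow_neg zero_le_two, div_eq_mul_inv, inv_inv, mul_comm]
    _ ≤ 2 ^ (2 : ℝ) * x ^ (-a) := by
        gcongr; norm_num
    _ = 4 * x ^ (-a) := by norm_num

noncomputable def decayTerm (α c x y : ℝ) : ℝ :=
  y ^ (-(2 * α)) * exp (-c * (x ^ (1 - α) - y ^ (1 - α)))

section decayTerm

variable {α c : ℝ}

lemma decayTerm_le_of_two_mul_le (hα0 : 0 ≤ α) (hα1 : α ≤ 1) (hc : 0 ≤ c) {x y : ℝ}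
    (hy : 1 ≤ y) (hyx : 2 * y ≤ x) :
    decayTerm α c x y ≤ exp (-(c * (1 - 2 ^ (α - 1)) * x ^ (1 - α))) := by
  have hpow : y ^ (-(2 * α)) ≤ 1 := rpow_le_one_of_one_le_of_nonpos hy (by linarith)
  have hhalf : y ^ (1 - α) ≤ 2 ^ (α - 1) * x ^ (1 - α) :=
    calc y ^ (1 - α) ≤ (x / 2) ^ (1 - α) := rpow_le_rpow (by linarith) (by linarith)
          (by linarith)
      _ = 2 ^ (α - 1) * x ^ (1 - α) := by
          rw [div_rpow (by linarith) zero_le_two, show α - 1 = -(1 - α) by ring,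
            rpow_neg zero_le_two, div_eq_mul_inv, mul_comm]
  have hexp : exp (-c * (x ^ (1 - α) - y ^ (1 - α))) ≤ exp (-(c * (1 - 2 ^ (α - 1)) *
      x ^ (1 - α))) := by
    gcongr; nlinarith
  exact (mul_le_of_le_one_left (exp_pos _).le hpow).trans hexp

lemma decayTerm_le_of_le_two_mul (hα0 : 0 ≤ α) (hα1 : α ≤ 1) (hc : 0 ≤ c) {x y : ℝ}
    (hx : 0 < x) (hxy : x ≤ 2 * y) :
    decayTerm α c x y ≤ 4 * x ^ (-(2 * α)) * exp (-(c * (1 - α) * x ^ (-α) * (x - y))) := by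
  have htangent := rpow_le_rpow_add_mul_sub (by linarith : 0 ≤ 1 - α) (by linarith) hx
    (by linarith : 0 ≤ y)
  rw [show 1 - α - 1 = -α by ring] at htangent
  have hexp : exp (-c * (x ^ (1 - α) - y ^ (1 - α))) ≤
      exp (-(c * (1 - α) * x ^ (-α) * (x - y))) := by
    gcongr; nlinarith
  exact mul_le_mul (rpow_neg_le_four_mul (by linarith) (by linarith) hx hxy) hexp
    (exp_pos _).le (by positivity)

lemma sum_Ioc_zero_half_decayTerm_le (hα0 : 0 ≤ α) (hα1 : α ≤ 1) (hc : 0 ≤ c) (n : ℕ) :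
    ∑ k ∈ Ioc 0 (n / 2), decayTerm α c n k ≤
      n * exp (-(c * (1 - 2 ^ (α - 1)) * (n : ℝ) ^ (1 - α))) := by
  calc ∑ k ∈ Ioc 0 (n / 2), decayTerm α c n k
        ≤ ∑ _k ∈ Ioc 0 (n / 2), exp (-(c * (1 - 2 ^ (α - 1)) * (n : ℝ) ^ (1 - α))) := by
        refine sum_le_sum fun k hk => decayTerm_le_of_two_mul_le hα0 hα1 hc ?_ ?_
        · exact_mod_cast (mem_Ioc.1 hk).1
        · exact_mod_cast (show 2 * k ≤ n by have := (mem_Ioc.1 hk).2; omega)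
    _ = (n / 2 : ℕ) * exp (-(c * (1 - 2 ^ (α - 1)) * (n : ℝ) ^ (1 - α))) := by
        rw [sum_const, Nat.card_Ioc, nsmul_eq_mul, Nat.sub_zero]
    _ ≤ n * exp (-(c * (1 - 2 ^ (α - 1)) * (n : ℝ) ^ (1 - α))) := by
        gcongr; exact_mod_cast Nat.div_le_self n 2

lemma sum_Ioc_half_pred_decayTerm_le (hα0 : 0 ≤ α) (hα1 : α < 1) (hc : 0 < c) {n : ℕ}
    (hn : 1 ≤ n) :
    ∑ k ∈ Ioc (n / 2) (n - 1), decayTerm α c n k ≤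
      4 * (1 + (c * (1 - α))⁻¹) * (n : ℝ) ^ (-α) := by
  have hn0 : (0 : ℝ) < n := by positivity
  set β := c * (1 - α) * (n : ℝ) ^ (-α) with hβ_def
  have hβ : 0 < β := mul_pos (mul_pos hc (by linarith)) (rpow_pos_of_pos hn0 _)
  have hterm : ∀ k ∈ Ioc (n / 2) (n - 1),
      decayTerm α c n k ≤ 4 * (n : ℝ) ^ (-(2 * α)) * exp (-β) ^ (n - k) := by
    intro k hk
    have hkn : k ≤ n := by have := (mem_Ioc.1 hk).2; omega
    have hnk : (n : ℝ) ≤ 2 * k := by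
      exact_mod_cast (show n ≤ 2 * k by have := (mem_Ioc.1 hk).1; omega)
    have hpow : exp (-β) ^ (n - k) = exp (-(c * (1 - α) * (n : ℝ) ^ (-α) * (n - k))) := by
      rw [← exp_nat_mul, Nat.cast_sub hkn, hβ_def]; ring_nf
    rw [hpow]
    exact decayTerm_le_of_le_two_mul hα0 hα1.le hc.le hn0 hnk
  have hsq : (n : ℝ) ^ (-(2 * α)) = (n : ℝ) ^ (-α) * (n : ℝ) ^ (-α) := by
    rw [← rpow_add hn0]; ring_nf
  have hle : (n : ℝ) ^ (-(2 * α)) ≤ (n : ℝ) ^ (-α) :=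
    rpow_le_rpow_of_exponent_le (by exact_mod_cast hn) (by linarith)
  calc ∑ k ∈ Ioc (n / 2) (n - 1), decayTerm α c n k
        ≤ ∑ k ∈ Ioc (n / 2) (n - 1), 4 * (n : ℝ) ^ (-(2 * α)) * exp (-β) ^ (n - k) :=
        sum_le_sum hterm
    _ = 4 * (n : ℝ) ^ (-(2 * α)) * ∑ k ∈ Ioc (n / 2) (n - 1), exp (-β) ^ (n - k) :=
        (mul_sum _ _ _).symm
    _ ≤ 4 * (n : ℝ) ^ (-(2 * α)) * (1 + β⁻¹) := by
        gcongr
        exact (sum_Ioc_pow_sub_le (exp_pos _).le (exp_le_one_iff.mpr (by linarith)) _ n).trans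
          (sum_range_exp_neg_pow_le hβ n)
    _ = 4 * ((n : ℝ) ^ (-(2 * α)) + (c * (1 - α))⁻¹ * (n : ℝ) ^ (-α)) := by
        have : (n : ℝ) ^ (-α) ≠ 0 := (rpow_pos_of_pos hn0 _).ne'
        rw [hβ_def, hsq]; field_simp
    _ ≤ 4 * (1 + (c * (1 - α))⁻¹) * (n : ℝ) ^ (-α) := by nlinarith

lemma exists_sum_Icc_decayTerm_le_mul_rpow_neg (hα0 : 0 ≤ α) (hα1 : α < 1) (hc : 0 < c) :
    ∃ C > 0, ∀ n : ℕ, 1 ≤ n →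
      ∑ k ∈ Icc 1 (n - 1), decayTerm α c n k ≤ C * (n : ℝ) ^ (-α) := by
  set δ := c * (1 - 2 ^ (α - 1))
  have hδ : 0 < δ :=
    mul_pos hc (sub_pos.mpr (rpow_lt_one_of_one_lt_of_neg one_lt_two (by linarith)))
  set m := ⌈(1 + α) / (1 - α)⌉₊
  have hm : 1 + α ≤ (1 - α) * m := by
    rw [mul_comm, ← div_le_iff₀ (by linarith)]; exact Nat.le_ceil _
  refine ⟨m ! / δ ^ m + 4 * (1 + (c * (1 - α))⁻¹), by positivity, fun n hn => ?_⟩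
  have hn0 : (0 : ℝ) < n := by positivity
  have hfar : n * exp (-(δ * (n : ℝ) ^ (1 - α))) ≤ m ! / δ ^ m * (n : ℝ) ^ (-α) := by
    calc n * exp (-(δ * (n : ℝ) ^ (1 - α)))
          = (n : ℝ) ^ (-α) * (n : ℝ) ^ (1 + α) * exp (-(δ * (n : ℝ) ^ (1 - α))) := by
          rw [← rpow_add hn0]; simp
      _ ≤ (n : ℝ) ^ (-α) * (m ! / δ ^ m * exp (δ * (n : ℝ) ^ (1 - α))) *
            exp (-(δ * (n : ℝ) ^ (1 - α))) := by
          gcongr; exact rpow_le_mul_exp_mul_rpow (by exact_mod_cast hn) hδ hm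
      _ = m ! / δ ^ m * (n : ℝ) ^ (-α) := by
          rw [exp_neg]; field_simp
  rw [← zero_add 1, Icc_add_one_left_eq_Ioc,
    ← sum_Ioc_consecutive _ (Nat.zero_le (n / 2)) (by omega : n / 2 ≤ n - 1)]
  linarith [sum_Ioc_zero_half_decayTerm_le hα0 hα1.le hc.le n,
    sum_Ioc_half_pred_decayTerm_le hα0 hα1 hc hn]

end decayTerm

/-- For `α ∈ (1/2, 1)` and `c > 0`, the sum
`S_n = Σ_{k=1}^{n-1} k^{-2α} exp(-c(n^{1-α} - k^{1-α}))` is `O(ln(n) n^{-α})`. -/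
theorem stmt_18
    (α c : ℝ) (hα : α ∈ Set.Ioo (1/2 : ℝ) 1) (hc : 0 < c) :
    ∃ C > 0, ∀ n : ℕ, 2 ≤ n →
      ∑ k ∈ Finset.Icc 1 (n - 1),
          (k : ℝ) ^ (-(2 * α)) * Real.exp (-c * ((n : ℝ) ^ (1 - α) - (k : ℝ) ^ (1 - α)))
        ≤ C * Real.log n * (n : ℝ) ^ (-α) := by
  obtain ⟨C, hC, hS⟩ := exists_sum_Icc_decayTerm_le_mul_rpow_neg (by linarith [hα.1]) hα.2 hc
  have hlog2 : 0 < log 2 := log_pos one_lt_two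
  refine ⟨C / log 2, by positivity, fun n hn => ?_⟩
  have hlog : log 2 ≤ log n := log_le_log two_pos (by exact_mod_cast hn)
  calc _ ≤ C * (n : ℝ) ^ (-α) := hS n (by omega)
    _ ≤ C / log 2 * log n * (n : ℝ) ^ (-α) := by
        gcongr
        rw [div_mul_eq_mul_div, le_div_iff₀ hlog2]
        gcongr
end

section
/- Let (u_n) be a sequence of nonnegative reals, C > 0, α ∈ (0,1), and l(n) defined by l(n)^{1−α} = n^{1−α} − c_α ln n (for n large so l(n) ≥ 1), such that for all n ≥ N: u_n ≤ C ln(n)/n^α + (1/2) max_{l(n) < k ≤ n} u_k. Then there exist N' ≥ N and C'' (e.g. C'' = 4C) such that u_n ≤ C'' ln(n)/n^α for all n ≥ N'. -/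
open Real Filter

/-!
Since `ln x = o(x^{1-α})`, the window `(l(n), n]` eventually contains `((2/3) n, n]`, and on that
window the rate `ln k / k^α` is at most `3/2` times its value at `n`. Hence if `u_k ≤ D ln k / k^α`
throughout the window with `D ≥ 4C`, the recursion gives
`u_n ≤ C ln n / n^α + (1/2) max (u_n, (3/2) D ln n / n^α) ≤ D ln n / n^α`.
Strong induction, started from a constant `D` that covers the finitely many initial terms,
proves the bound for all large `n`.
-/

theorem eventually_mul_le_rpow_sub_mul_log {p θ : ℝ} (hp : 0 < p) (hθ0 : 0 ≤ θ) (hθ1 : θ < 1)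
    (c : ℝ) : ∀ᶠ x : ℝ in atTop, θ * x ≤ (x ^ p - c * log x) ^ (1 / p) := by
  have hε : 0 < 1 - θ ^ p := sub_pos.2 (rpow_lt_one hθ0 hθ1 hp)
  have hlog := ((isLittleO_log_rpow_atTop hp).const_mul_left c).bound hε
  filter_upwards [hlog, eventually_ge_atTop 0] with x hx hx0
  have hxp : 0 ≤ x ^ p := rpow_nonneg hx0 p
  rw [Real.norm_eq_abs, Real.norm_of_nonneg hxp] at hx
  have hbase : (θ * x) ^ p ≤ x ^ p - c * log x := by
    rw [mul_rpow hθ0 hx0]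
    nlinarith [le_abs_self (c * log x)]
  calc θ * x = ((θ * x) ^ p) ^ (1 / p) := by
        rw [← rpow_mul (mul_nonneg hθ0 hx0), mul_one_div_cancel hp.ne', rpow_one]
    _ ≤ (x ^ p - c * log x) ^ (1 / p) :=
        rpow_le_rpow (rpow_nonneg (mul_nonneg hθ0 hx0) p) hbase (by positivity)

theorem log_div_rpow_le_inv_mul {α θ : ℝ} (hα0 : 0 ≤ α) (hα1 : α ≤ 1) (hθ0 : 0 < θ)
    (hθ1 : θ ≤ 1) {k n : ℝ} (hk : 1 ≤ k) (hθk : θ * n ≤ k) (hkn : k ≤ n) :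
    log k / k ^ α ≤ θ⁻¹ * (log n / n ^ α) := by
  have hn : 0 < n := by linarith
  have hpow : θ * n ^ α ≤ k ^ α :=
    calc θ * n ^ α ≤ θ ^ α * n ^ α := by
          gcongr
          simpa using rpow_le_rpow_of_exponent_ge hθ0 hθ1 hα1
      _ = (θ * n) ^ α := (mul_rpow hθ0.le hn.le).symm
      _ ≤ k ^ α := rpow_le_rpow (by positivity) hθk hα0
  calc log k / k ^ α ≤ log n / (θ * n ^ α) := by
        exact div_le_div₀ (log_nonneg (hk.trans hkn)) (log_le_log (by linarith) hkn)
          (by positivity) hpow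
    _ = θ⁻¹ * (log n / n ^ α) := by field_simp

/-- The hypothesis `0 ≤ b` covers an empty window, whose `sSup` is `0`. -/
theorem sSup_window_le (u : ℕ → ℝ) (l : ℝ) (n : ℕ) {b : ℝ} (hb : 0 ≤ b) (hn : u n ≤ b)
    (hk : ∀ k : ℕ, l < k → k < n → u k ≤ b) :
    sSup {x : ℝ | ∃ k : ℕ, l < k ∧ k ≤ n ∧ x = u k} ≤ b := by
  refine Real.sSup_le ?_ hb
  rintro x ⟨k, hlk, hkn, rfl⟩
  rcases hkn.lt_or_eq with hkn | rfl
  · exact hk k hlk hkn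
  · exact hn

theorem le_mul_of_le_add_half_max {a y C D : ℝ} (hy : 0 ≤ y) (hD0 : 0 ≤ D) (hD : 4 * C ≤ D)
    (h : a ≤ C * y + 1 / 2 * max a (3 / 2 * (D * y))) : a ≤ D * y := by
  have hCy : 4 * (C * y) ≤ D * y := by nlinarith
  have hDy : 0 ≤ D * y := mul_nonneg hD0 hy
  rcases le_total a (3 / 2 * (D * y)) with hmax | hmax
  · rw [max_eq_right hmax] at h
    linarith
  · rw [max_eq_left hmax] at h
    linarith

theorem exists_le_mul_of_le_add_half_sSup (u g l : ℕ → ℝ) (C : ℝ) (n₀ M : ℕ)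
    (hg : ∀ n ≥ n₀, 0 < g n)
    (hwin : ∀ n > M, ∀ k : ℕ, l n < k → k < n → n₀ ≤ k ∧ g k ≤ 3 / 2 * g n)
    (hrec : ∀ n ≥ n₀,
      u n ≤ C * g n + 1 / 2 * sSup {x : ℝ | ∃ k : ℕ, l n < k ∧ k ≤ n ∧ x = u k}) :
    ∃ D > 0, ∀ n ≥ n₀, u n ≤ D * g n := by
  obtain ⟨B, hB⟩ := ((Set.finite_Icc n₀ M).image fun n => u n / g n).bddAbove
  set D := max (4 * C) (max B 1)
  have hD4C : 4 * C ≤ D := le_max_left _ _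
  have hDB : B ≤ D := (le_max_left _ _).trans (le_max_right _ _)
  have hD1 : 1 ≤ D := (le_max_right _ _).trans (le_max_right _ _)
  have hD0 : 0 ≤ D := by linarith
  refine ⟨D, by linarith, fun n => ?_⟩
  induction n using Nat.strong_induction_on with
  | _ n ih =>
    intro hn
    rcases le_or_gt n M with hnM | hnM
    · have hquot : u n / g n ≤ B := hB ⟨n, ⟨hn, hnM⟩, rfl⟩
      exact (div_le_iff₀ (hg n hn)).1 (hquot.trans hDB)
    · have hDg : 0 ≤ 3 / 2 * (D * g n) := by have := hg n hn; positivity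
      have hsSup := sSup_window_le u (l n) n (b := max (u n) (3 / 2 * (D * g n)))
        (hDg.trans (le_max_right _ _)) (le_max_left _ _) fun k hlk hkn => by
          obtain ⟨hk₀, hgk⟩ := hwin n hnM k hlk hkn
          calc u k ≤ D * g k := ih k hkn hk₀
            _ ≤ D * (3 / 2 * g n) := by gcongr
            _ = 3 / 2 * (D * g n) := by ring
            _ ≤ _ := le_max_right _ _
      refine le_mul_of_le_add_half_max (hg n hn).le hD0 hD4C ?_
      linarith [hrec n hn]

theorem stmt_19_general
    (α cα C : ℝ) (hα : α ∈ Set.Ioo (0 : ℝ) 1)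
    (u : ℕ → ℝ)
    (l : ℕ → ℝ)
    (hl : ∀ n : ℕ, l n = ((n : ℝ) ^ (1 - α) - cα * Real.log n) ^ (1 / (1 - α)))
    (N : ℕ)
    (hrec : ∀ n ≥ N,
      u n ≤ C * Real.log n / (n : ℝ) ^ α +
        (1 / 2) * sSup {x : ℝ | ∃ k : ℕ, l n < (k : ℝ) ∧ k ≤ n ∧ x = u k}) :
    ∃ N' ≥ N, ∃ C'' : ℝ, 0 < C'' ∧ ∀ n ≥ N',
      u n ≤ C'' * Real.log n / (n : ℝ) ^ α := by
  obtain ⟨hα0, hα1⟩ := hα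
  obtain ⟨n₁, hn₁⟩ := eventually_atTop.1 <| tendsto_natCast_atTop_atTop.eventually <|
    eventually_mul_le_rpow_sub_mul_log (sub_pos.2 hα1) (by norm_num : (0 : ℝ) ≤ 2 / 3)
      (by norm_num) cα
  set n₀ := max N (max n₁ 2)
  have hwin : ∀ n > 2 * n₀, ∀ k : ℕ, l n < k → k < n →
      n₀ ≤ k ∧ log k / (k : ℝ) ^ α ≤ 3 / 2 * (log n / (n : ℝ) ^ α) := by
    intro n hn k hlk hkn
    have hθk : 2 / 3 * (n : ℝ) < k := (hl n ▸ hn₁ n (by omega)).trans_lt hlk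
    have hn' : (2 * n₀ : ℝ) < n := by exact_mod_cast hn
    have hk₀ : n₀ ≤ k := by exact_mod_cast (by linarith : (n₀ : ℝ) ≤ k)
    refine ⟨hk₀, ?_⟩
    convert log_div_rpow_le_inv_mul hα0.le hα1.le (by norm_num : (0 : ℝ) < 2 / 3) (by norm_num)
      (by exact_mod_cast (by omega : 1 ≤ k)) hθk.le (by exact_mod_cast hkn.le) using 2
    norm_num
  obtain ⟨D, hD, hbound⟩ := exists_le_mul_of_le_add_half_sSup u (fun n => log n / (n : ℝ) ^ α)
    l C n₀ (2 * n₀)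
    (fun n hn => have hn1 : (1 : ℝ) < n := by exact_mod_cast (by omega : 1 < n)
      div_pos (log_pos hn1) (rpow_pos_of_pos (by linarith) α))
    hwin (fun n hn => by simpa only [mul_div_assoc] using hrec n (by omega))
  exact ⟨n₀, le_max_left _ _, D, hD, fun n hn => by simpa only [mul_div_assoc] using hbound n hn⟩

/-- Deterministic induction lemma: if for all `n ≥ N`,
`u_n ≤ C ln(n)/n^α + (1/2) sup_{l(n) < k ≤ n} u_k` with
`l(n) = (n^{1-α} - c_α ln n)^{1/(1-α)}`, then `u_n = O(ln(n)/n^α)`. -/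
theorem stmt_19
    (α cα C : ℝ) (hα : α ∈ Set.Ioo (0 : ℝ) 1) (hcα : 0 < cα) (hC : 0 < C)
    (u : ℕ → ℝ) (hu : ∀ n, 0 ≤ u n)
    (l : ℕ → ℝ)
    (hl : ∀ n : ℕ, l n = ((n : ℝ) ^ (1 - α) - cα * Real.log n) ^ (1 / (1 - α)))
    (N : ℕ) (hN : ∀ n ≥ N, 1 ≤ l n)
    (hrec : ∀ n ≥ N,
      u n ≤ C * Real.log n / (n : ℝ) ^ α +
        (1 / 2) * sSup {x : ℝ | ∃ k : ℕ, l n < (k : ℝ) ∧ k ≤ n ∧ x = u k}) :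
    ∃ N' ≥ N, ∃ C'' : ℝ, 0 < C'' ∧ ∀ n ≥ N',
      u n ≤ C'' * Real.log n / (n : ℝ) ^ α :=
  stmt_19_general α cα C hα u l hl N hrec
end
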